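/- If c = Σ_{j=1}^k a_j·σ_j ∈ Cₙ(X; ℤ) is a singular n-cycle (in reduced form, with distinct singular simplices σ_j) on a topological space X and n is even, then Σ_{j=1}^k a_j is even; in particular |c|₁ = Σ_j |a_j| is even. -/

import Mathlib

open Finsupp

noncomputable section

namespace SimplexCategory

/-- The old Mathlib `SimplexCategory.toTopObj` (removed since), restored with its old meaning. -/
def toTopObj (x : SimplexCategory) : Set (Fin (x.len + 1) → NNReal) :=
  { f | ∑ i, f i = 1 }

/-- The old Mathlib `SimplexCategory.toTopMap` (removed since), restored with its old meaning. -/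
def toTopMap {x y : SimplexCategory} (f : x ⟶ y) (g : x.toTopObj) : y.toTopObj :=
  ⟨fun i => ∑ j ∈ Finset.univ.filter (fun k => f.toOrderHom k = i), g.1 j, by
    show ∑ i, ∑ j ∈ Finset.univ.filter (fun k => f.toOrderHom k = i), g.1 j = 1
    rw [Finset.sum_fiberwise]
    exact g.2⟩

theorem continuous_toTopMap {x y : SimplexCategory} (f : x ⟶ y) :
    Continuous (toTopMap f) := by
  refine Continuous.subtype_mk (continuous_pi fun i => ?_) _
  exact continuous_finset_sum _ (fun j _ => (continuous_apply _).comp continuous_subtype_val)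

end SimplexCategory

/-- The topological standard `n`-simplex. -/
abbrev TopSimplex (n : ℕ) : Type :=
  (SimplexCategory.mk n).toTopObj

/-- Singular `n`-simplices on `X`. -/
abbrev SingularSimplex (n : ℕ) (X : Type*) [TopologicalSpace X] : Type _ :=
  C(TopSimplex n, X)

/-- Singular `n`-chains on `X` with coefficients in `R`. -/
abbrev SC (R : Type*) [Ring R] (n : ℕ) (X : Type*) [TopologicalSpace X] : Type _ :=
  SingularSimplex n X →₀ R

/-- The inclusion of the `j`-th face of the standard `(n+1)`-simplex. -/
def faceIncl (n : ℕ) (j : Fin (n + 2)) : C(TopSimplex n, TopSimplex (n + 1)) :=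
  ⟨SimplexCategory.toTopMap (SimplexCategory.δ j), SimplexCategory.continuous_toTopMap _⟩

/-- The `j`-th face of a singular `(n+1)`-simplex. -/
def sface {n : ℕ} {X : Type*} [TopologicalSpace X] (j : Fin (n + 2))
    (σ : SingularSimplex (n + 1) X) : SingularSimplex n X :=
  σ.comp (faceIncl n j)

/-- The singular boundary operator. -/
def bdry (R : Type*) [Ring R] {n : ℕ} (X : Type*) [TopologicalSpace X] :
    SC R (n + 1) X →+ SC R n X :=
  Finsupp.liftAddHom fun σ =>
    ∑ j : Fin (n + 2), (Finsupp.singleAddHom (sface j σ)).comp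
      (AddMonoidHom.mulLeft ((-1 : R) ^ (j : ℕ)))

/-- The subgroup of singular cycles. -/
def cycles (R : Type*) [Ring R] : (n : ℕ) → (X : Type*) → [TopologicalSpace X] →
    AddSubgroup (SC R n X)
  | 0, _, _ => ⊤
  | (_ + 1), X, _ => (bdry R X).ker

/-- The subgroup of singular boundaries. -/
def bdries (R : Type*) [Ring R] (n : ℕ) (X : Type*) [TopologicalSpace X] :
    AddSubgroup (SC R n X) :=
  (bdry R (n := n) X).range

/-- Singular homology of `X` in degree `n` with coefficients in `R`. -/
abbrev SH (R : Type*) [Ring R] (n : ℕ) (X : Type*) [TopologicalSpace X] : Type _ :=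
  cycles R n X ⧸ ((bdries R n X).addSubgroupOf (cycles R n X))

/-- The homology class of a cycle. -/
def hcls {R : Type*} [Ring R] {n : ℕ} {X : Type*} [TopologicalSpace X]
    (c : SC R n X) (hc : c ∈ cycles R n X) : SH R n X :=
  QuotientAddGroup.mk ⟨c, hc⟩

lemma mem_cycles_of {R : Type*} [Ring R] {n : ℕ} {X : Type*} [TopologicalSpace X]
    {c : SC R (n + 1) X} (hc : bdry R X c = 0) : c ∈ cycles R (n + 1) X :=
  hc

/-- The chain map induced by a continuous map. -/
def cmap (R : Type*) [Ring R] {n : ℕ} {X Y : Type*} [TopologicalSpace X] [TopologicalSpace Y]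
    (f : C(X, Y)) : SC R n X →+ SC R n Y :=
  Finsupp.liftAddHom fun σ => Finsupp.singleAddHom (f.comp σ)

lemma sface_comp {n : ℕ} {X Y : Type*} [TopologicalSpace X] [TopologicalSpace Y]
    (f : C(X, Y)) (j : Fin (n + 2)) (σ : SingularSimplex (n + 1) X) :
    sface j (f.comp σ) = f.comp (sface j σ) := rfl

lemma cmap_bdry (R : Type*) [Ring R] {n : ℕ} {X Y : Type*} [TopologicalSpace X]
    [TopologicalSpace Y] (f : C(X, Y)) (c : SC R (n + 1) X) :
    bdry R Y (cmap R f c) = cmap R f (bdry R X c) := by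
  have : (bdry R Y).comp (cmap R (n := n + 1) f) = (cmap R f).comp (bdry R X) := by
    refine Finsupp.addHom_ext fun σ a => ?_
    simp only [AddMonoidHom.comp_apply, bdry, cmap, Finsupp.liftAddHom_apply_single,
      AddMonoidHom.finset_sum_apply, AddMonoidHom.coe_comp, Function.comp_apply,
      AddMonoidHom.coe_mulLeft, Finsupp.singleAddHom_apply, map_sum, sface_comp]
  exact DFunLike.congr_fun this c

lemma cmap_mem_cycles {R : Type*} [Ring R] {n : ℕ} {X Y : Type*} [TopologicalSpace X]
    [TopologicalSpace Y] (f : C(X, Y)) {c : SC R n X} (hc : c ∈ cycles R n X) :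
    cmap R f c ∈ cycles R n Y := by
  cases n with
  | zero => trivial
  | succ n =>
      have hc' : bdry R X c = 0 := hc
      show bdry R Y (cmap R f c) = 0
      rw [cmap_bdry, hc', map_zero]

/-- The map induced on homology by a continuous map. -/
def hmap (R : Type*) [Ring R] {n : ℕ} {X Y : Type*} [TopologicalSpace X] [TopologicalSpace Y]
    (f : C(X, Y)) : SH R n X →+ SH R n Y :=
  QuotientAddGroup.map _ _
    (AddMonoidHom.codRestrict ((cmap R f).comp (cycles R n X).subtype) (cycles R n Y)
      fun c => cmap_mem_cycles f c.2)
    (by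
      rintro ⟨c, hc⟩ hmem
      have hb : c ∈ bdries R n X := hmem
      obtain ⟨b, hb⟩ := hb
      show _ ∈ (bdries R n Y).addSubgroupOf _
      refine ⟨cmap R f b, ?_⟩
      simp only [AddMonoidHom.codRestrict_apply, AddMonoidHom.comp_apply,
        AddSubgroup.coe_subtype]
      rw [cmap_bdry, hb])

/-- The `ℓ¹`-norm of an integral chain. -/
def norm1 {n : ℕ} {X : Type*} [TopologicalSpace X] (c : SC ℤ n X) : ℕ :=
  c.sum fun _ a => a.natAbs

/-- The integral `ℓ¹`-seminorm of an integral homology class. -/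
def clnorm {n : ℕ} {X : Type*} [TopologicalSpace X] (α : SH ℤ n X) : ℕ :=
  sInf { m | ∃ c : cycles ℤ n X, (QuotientAddGroup.mk c : SH ℤ n X) = α ∧ norm1 c.1 = m }

/-- A fundamental class: a generator of the infinite cyclic top homology of an oriented
closed connected manifold. -/
structure FundClass (n : ℕ) (M : Type*) [TopologicalSpace M] where
  cls : SH ℤ n M
  spans : ∀ x : SH ℤ n M, ∃ k : ℤ, x = k • cls
  torsionfree : ∀ k : ℤ, k • cls = 0 → k = 0

/-- The integral simplicial volume. -/
def isv (n : ℕ) (M : Type*) [TopologicalSpace M] (φ : FundClass n M) : ℕ :=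
  clnorm φ.cls

/-- A matching on the faces of the standard `(n+1)`-simplex: a bijection from the
even-indexed faces onto the odd-indexed faces. -/
def IsMatching (n : ℕ) (π : Fin (n + 2) → Fin (n + 2)) : Prop :=
  Set.BijOn π { j | Even (j : ℕ) } { j | Odd (j : ℕ) }

/-- The gluing relation of the model space of a matching. -/
def matchRel (n : ℕ) (π : Fin (n + 2) → Fin (n + 2)) (x y : TopSimplex (n + 1)) : Prop :=
  ∃ j : Fin (n + 2), Even (j : ℕ) ∧ ∃ t : TopSimplex n,
    x = faceIncl n j t ∧ y = faceIncl n (π j) t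

/-- The model space `M_π` of a matching `π`. -/
abbrev ModelSpace (n : ℕ) (π : Fin (n + 2) → Fin (n + 2)) : Type :=
  Quot (matchRel n π)

/-- The canonical projection `σ_π : Δ^{n+1} → M_π`, a singular simplex on `M_π`. -/
def modelProj (n : ℕ) (π : Fin (n + 2) → Fin (n + 2)) :
    SingularSimplex (n + 1) (ModelSpace n π) :=
  ⟨Quot.mk _, continuous_quot_mk⟩

/-- The unreduced suspension of a space. -/
abbrev Susp (Y : Type*) [TopologicalSpace Y] : Type _ :=
  Quot (fun a b : Y × (Set.Icc (-1 : ℝ) 1) =>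
    ((a.2 : ℝ) = 1 ∧ (b.2 : ℝ) = 1) ∨ ((a.2 : ℝ) = -1 ∧ (b.2 : ℝ) = -1))

end

theorem Finset.even_sum_natAbs_iff {ι : Type*} (s : Finset ι) (f : ι → ℤ) :
    Even (∑ i ∈ s, (f i).natAbs) ↔ Even (∑ i ∈ s, f i) := by
  rw [← Int.even_coe_nat, Nat.cast_sum, ← Int.even_sub, ← Finset.sum_sub_distrib]
  exact Finset.even_sum _ fun i _ => by simp [Int.even_sub, even_abs]

noncomputable def coeffSum (R : Type*) [Ring R] {n : ℕ} {X : Type*} [TopologicalSpace X] :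
    SC R n X →+ R :=
  Finsupp.liftAddHom fun _ => AddMonoidHom.id R

theorem coeffSum_apply (R : Type*) [Ring R] {n : ℕ} {X : Type*} [TopologicalSpace X]
    (c : SC R n X) : coeffSum R c = c.sum fun _ a => a :=
  rfl

/-- A singular `(n+1)`-simplex has `n + 2` faces; when that number is odd, the alternating signs
of the faces sum to `1`. -/
theorem coeffSum_bdry {R : Type*} [Ring R] {n : ℕ} {X : Type*} [TopologicalSpace X]
    (hn : Even (n + 1)) (c : SC R (n + 1) X) : coeffSum R (bdry R X c) = coeffSum R c := by
  have hsigns : ∑ j : Fin (n + 2), (-1 : R) ^ (j : ℕ) = 1 := by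
    rw [Fin.sum_univ_eq_sum_range (fun j => (-1 : R) ^ j), neg_one_geom_sum,
      if_neg (Nat.not_even_iff_odd.2 hn.add_one : ¬Even (n + 2))]
  suffices (coeffSum R).comp (bdry R X) = coeffSum R from DFunLike.congr_fun this c
  refine Finsupp.addHom_ext fun σ a => ?_
  simp only [AddMonoidHom.comp_apply, bdry, coeffSum, Finsupp.liftAddHom_apply_single,
    AddMonoidHom.finsetSum_apply, AddMonoidHom.coe_mulLeft, Finsupp.singleAddHom_apply, map_sum,
    AddMonoidHom.id_apply, ← Finset.sum_mul, hsigns, one_mul]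

theorem stmt11 (X : Type*) [TopologicalSpace X] (n : ℕ) (hn : Even (n + 1))
    (c : SC ℤ (n + 1) X) (hc : bdry ℤ X c = 0) :
    Even (c.sum fun _ a => a) ∧ Even (norm1 c) := by
  have hsum : (c.sum fun _ a => a) = 0 := by
    rw [← coeffSum_apply, ← coeffSum_bdry hn, hc, map_zero]
  have heven : Even (c.sum fun _ a => a) := hsum ▸ Even.zero
  exact ⟨heven, (Finset.even_sum_natAbs_iff c.support c).2 heven⟩
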